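/- arXiv:math/0509590 — 3 statements merged into one kernel-verified Lean document; each statement's English description precedes it below -/
import Mathlib

section
/- Let G be a connected reductive algebraic group over an algebraically closed field K, let (ρ,V) be a finite-dimensional linear representation of G, let W ⊆ V be a d-dimensional subspace with basis w₁,…,w_d, let X = ⊕^d V with the diagonal G-action, and let x = (w₁,…,w_d) ∈ X. Let S ⊆ X be a closed G-invariant subvariety with x ∉ S. If λ ∈ |X,x| satisfies α_{S,x}(λ) > 0, then α_{S,x}(λ) = min over w ∈ W of α_{{w₀},w}(λ), where w₀ = lim_{t→0} ρ(λ(t))w. -/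
/-- An axiomatization of a connected reductive linear algebraic group `G` over the
algebraically closed field `K`, recording which abstract homomorphisms `𝔾_m = Kˣ → G` are
(algebraic) cocharacters. -/
structure ConnectedReductiveGroup (K : Type*) [Field K] [IsAlgClosed K] where
  /-- the group of `K`-points of `G` -/
  G : Type*
  [grp : Group G]
  /-- `IsCochar γ`: the homomorphism `γ : Kˣ → G` is an algebraic cocharacter `𝔾_m → G` -/
  IsCochar : (Kˣ →* G) → Prop

attribute [instance] ConnectedReductiveGroup.grp

section WeightTheory

variable {K : Type*} [Field K] {V : Type*} [AddCommGroup V] [Module K V]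
variable {G : Type*} [Group G]

/-- The weight space `V(λ;i) = {v ∈ V ∣ ρ(λ(t))v = tⁱ v for all t}` of the cocharacter `λ`
acting via the representation `ρ`. -/
def wtSpace (ρ : G →* V ≃ₗ[K] V) (l : Kˣ →* G) (i : ℤ) : Submodule K V where
  carrier := {v | ∀ t : Kˣ, ρ (l t) v = ((t ^ i : Kˣ) : K) • v}
  add_mem' := by
    intro a b ha hb t
    rw [map_add, ha t, hb t, smul_add]
  zero_mem' := by
    intro t
    rw [map_zero, smul_zero]
  smul_mem' := by
    intro c a ha t
    rw [map_smul, ha t, smul_comm]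

/-- `λ ∈ |V,v|`: the limit `lim_{t→0} ρ(λ(t))v` exists, i.e. `v` lies in the sum of the
nonnegative weight spaces of `λ`. -/
def limitExists (ρ : G →* V ≃ₗ[K] V) (l : Kˣ →* G) (v : V) : Prop :=
  v ∈ ⨆ i : ℕ, wtSpace ρ l (i : ℤ)

/-- The component `v_i ∈ V(λ;i)` of `v` in the weight space decomposition
`V = ⊕_{i ∈ ℤ} V(λ;i)`.  (For an algebraic representation this decomposition is internal;
this is recorded by the hypothesis `hdec`.)  When the limit `lim_{t→0} ρ(λ(t))v` exists, it
equals the component `v₀ = wtComponent ρ l hdec v 0`. -/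
noncomputable def wtComponent (ρ : G →* V ≃ₗ[K] V) (l : Kˣ →* G)
    (hdec : DirectSum.IsInternal fun i : ℤ => wtSpace ρ l i) (v : V) (i : ℤ) : V :=
  ((Equiv.ofBijective _ hdec).symm v i : V)

open scoped Classical in
/-- The Kempf instability degree `α_{S,v}(λ)` of `v ∉ S` relative to a closed `G`-invariant
subvariety `S`: writing `v₀ = lim_{t→0} ρ(λ(t))v` (the weight-`0` component of `v`), it is
the order of vanishing `min {j > 0 ∣ v_j ≠ 0}` of `t ↦ ρ(λ(t))v - v₀` if `v₀ ∈ S`, and `0`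
otherwise. -/
noncomputable def kempfAlpha (ρ : G →* V ≃ₗ[K] V) (l : Kˣ →* G)
    (hdec : DirectSum.IsInternal fun i : ℤ => wtSpace ρ l i) (S : Set V) (v : V) : ℕ∞ :=
  if wtComponent ρ l hdec v 0 ∈ S then
    ⨅ n ∈ {n : ℕ | 0 < n ∧ wtComponent ρ l hdec v (n : ℤ) ≠ 0}, (n : ℕ∞)
  else 0

/-- The diagonal representation of `G` on `⊕^d V = (Fin d → V)`. -/
def diagRep (d : ℕ) (ρ : G →* V ≃ₗ[K] V) : G →* ((Fin d → V) ≃ₗ[K] (Fin d → V)) where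
  toFun g := LinearEquiv.piCongrRight fun _ : Fin d => ρ g
  map_one' := by
    apply LinearEquiv.ext
    intro x
    funext i
    show (ρ 1) (x i) = x i
    rw [map_one]
    rfl
  map_mul' g h := by
    apply LinearEquiv.ext
    intro x
    funext i
    simp only [map_mul]
    rfl

end WeightTheory

/-- A function `f : V → K` is a polynomial (regular) function on the `K`-vector space `V`:
it lies in the `K`-subalgebra of `V → K` generated by the linear functionals. -/
def IsPolyFun (K : Type*) [CommRing K] {V : Type*} [AddCommGroup V] [Module K V]
    (f : V → K) : Prop :=
  f ∈ Algebra.adjoin K (Set.range fun φ : Module.Dual K V => (φ : V → K))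

/-- A subset of the `K`-vector space `V` is Zariski closed if it is the common zero locus of a
family of polynomial functions on `V`. -/
def IsZariskiClosed (K : Type*) [CommRing K] {V : Type*} [AddCommGroup V] [Module K V]
    (S : Set V) : Prop :=
  ∃ T : Set (V → K), (∀ f ∈ T, IsPolyFun K f) ∧ S = {v | ∀ f ∈ T, f v = 0}

/-- The Zariski closure of a subset of the `K`-vector space `V`: the common zero locus of all
polynomial functions vanishing on the subset. -/
def zariskiClosure (K : Type*) [CommRing K] {V : Type*} [AddCommGroup V] [Module K V]
    (A : Set V) : Set V :=
  {v | ∀ f : V → K, IsPolyFun K f → (∀ a ∈ A, f a = 0) → f v = 0}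


section AuxLemmas

open scoped DirectSum

set_option synthInstance.maxHeartbeats 1000000
set_option maxHeartbeats 1000000

variable {K : Type*} [Field K] {V : Type*} [AddCommGroup V] [Module K V]
variable {G : Type*} [Group G]

lemma coeAddMonoidHom_eq_coeLinearMap {ι : Type*} [DecidableEq ι] (A : ι → Submodule K V) :
    ⇑(DirectSum.coeAddMonoidHom A) = ⇑(DirectSum.coeLinearMap A) := by
  have h : (DirectSum.coeLinearMap A).toAddMonoidHom = DirectSum.coeAddMonoidHom A := by
    refine DirectSum.addHom_ext fun i x => ?_
    simp [DirectSum.coeLinearMap_of, DirectSum.coeAddMonoidHom_of]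
  rw [← h]; rfl

/-- Uniqueness of components: if `c` is a decomposition of `v`, its components are the
weight components of `v`. -/
lemma wtComponent_spec (ρ : G →* V ≃ₗ[K] V) (l : Kˣ →* G)
    (hdec : DirectSum.IsInternal fun i : ℤ => wtSpace ρ l i) (v : V)
    (c : ⨁ (i : ℤ), wtSpace ρ l i)
    (hc : DirectSum.coeAddMonoidHom (fun i : ℤ => wtSpace ρ l i) c = v) (i : ℤ) :
    wtComponent ρ l hdec v i = c i := by
  have h : (Equiv.ofBijective _ hdec).symm v = c := by
    apply hdec.injective
    show DirectSum.coeAddMonoidHom (fun i : ℤ => wtSpace ρ l i)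
      ((Equiv.ofBijective _ hdec).symm v) = DirectSum.coeAddMonoidHom _ c
    rw [hc]
    exact (Equiv.ofBijective _ hdec).apply_symm_apply v
  rw [wtComponent, h]

lemma wtComponent_sum (ρ : G →* V ≃ₗ[K] V) (l : Kˣ →* G)
    (hdec : DirectSum.IsInternal fun i : ℤ => wtSpace ρ l i) (v : V) :
    DirectSum.coeAddMonoidHom (fun i : ℤ => wtSpace ρ l i)
      ((Equiv.ofBijective _ hdec).symm v) = v :=
  (Equiv.ofBijective _ hdec).apply_symm_apply v

/-- The weight component, as a linear map. -/
noncomputable def wtComponentL (ρ : G →* V ≃ₗ[K] V) (l : Kˣ →* G)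
    (hdec : DirectSum.IsInternal fun i : ℤ => wtSpace ρ l i) (i : ℤ) : V →ₗ[K] V where
  toFun v := wtComponent ρ l hdec v i
  map_add' a b := by
    show wtComponent ρ l hdec (a + b) i = wtComponent ρ l hdec a i + wtComponent ρ l hdec b i
    rw [wtComponent_spec ρ l hdec (a + b)
      ((Equiv.ofBijective _ hdec).symm a + (Equiv.ofBijective _ hdec).symm b)
      (by rw [map_add, wtComponent_sum, wtComponent_sum]) i]
    rw [DirectSum.add_apply, Submodule.coe_add, wtComponent, wtComponent]
  map_smul' r a := by
    show wtComponent ρ l hdec (r • a) i = r • wtComponent ρ l hdec a i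
    rw [wtComponent_spec ρ l hdec (r • a)
      (r • (Equiv.ofBijective _ hdec).symm a)
      (by
        rw [show (DirectSum.coeAddMonoidHom (fun i : ℤ => wtSpace ρ l i))
            (r • (Equiv.ofBijective _ hdec).symm a)
          = (DirectSum.coeLinearMap (fun i : ℤ => wtSpace ρ l i))
            (r • (Equiv.ofBijective _ hdec).symm a) from
          congrFun (coeAddMonoidHom_eq_coeLinearMap _) _]
        rw [map_smul, ← congrFun (coeAddMonoidHom_eq_coeLinearMap _) _, wtComponent_sum]) i]
    rw [DirectSum.smul_apply, Submodule.coe_smul, wtComponent]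

lemma wtComponent_diag {d : ℕ} (ρ : G →* V ≃ₗ[K] V) (l : Kˣ →* G)
    (hdecV : DirectSum.IsInternal fun i : ℤ => wtSpace ρ l i)
    (hdecX : DirectSum.IsInternal fun i : ℤ => wtSpace (diagRep d ρ) l i)
    (x : Fin d → V) (n : ℤ) (i : Fin d) :
    wtComponent (diagRep d ρ) l hdecX x n i = wtComponent ρ l hdecV (x i) n := by
  classical
  -- evaluation at `i` as an additive hom between weight spaces
  have hmem : ∀ (m : ℤ) (y : wtSpace (diagRep d ρ) l m), (y : Fin d → V) i ∈ wtSpace ρ l m := by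
    intro m y t
    have := y.2 t
    have h1 := congrFun this i
    simpa [diagRep] using h1
  let f : ∀ m : ℤ, wtSpace (diagRep d ρ) l m →+ wtSpace ρ l m := fun m =>
    { toFun := fun y => ⟨(y : Fin d → V) i, hmem m y⟩
      map_zero' := rfl
      map_add' := fun a b => rfl }
  set cX : ⨁ (m : ℤ), wtSpace (diagRep d ρ) l m := (Equiv.ofBijective _ hdecX).symm x with hcX
  have hsumX : DirectSum.coeAddMonoidHom (fun m : ℤ => wtSpace (diagRep d ρ) l m) cX = x :=
    wtComponent_sum _ _ _ _
  let cV : ⨁ (m : ℤ), wtSpace ρ l m := DFinsupp.mapRange.addMonoidHom f cX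
  have key : ∀ c : ⨁ (m : ℤ), wtSpace (diagRep d ρ) l m,
      DirectSum.coeAddMonoidHom (fun m : ℤ => wtSpace ρ l m)
        (DFinsupp.mapRange.addMonoidHom f c)
        = (DirectSum.coeAddMonoidHom (fun m : ℤ => wtSpace (diagRep d ρ) l m) c) i := by
    intro c
    induction c using DirectSum.induction_on with
    | zero =>
        rw [AddMonoidHom.map_zero, AddMonoidHom.map_zero, AddMonoidHom.map_zero]
        rfl
    | of m y =>
        have h1 : (DFinsupp.mapRange.addMonoidHom f)
            (DirectSum.of (fun m : ℤ => wtSpace (diagRep d ρ) l m) m y)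
            = DirectSum.of (fun m : ℤ => wtSpace ρ l m) m (f m y) := by
          show DFinsupp.mapRange (fun m => ⇑(f m)) (fun m => (f m).map_zero)
              (DFinsupp.single m y) = DFinsupp.single m (f m y)
          exact DFinsupp.mapRange_single
        rw [h1, DirectSum.coeAddMonoidHom_of, DirectSum.coeAddMonoidHom_of]
        rfl
    | add a b ha hb =>
        rw [AddMonoidHom.map_add, AddMonoidHom.map_add, AddMonoidHom.map_add, ha, hb]
        rfl
  have hsumV : DirectSum.coeAddMonoidHom (fun m : ℤ => wtSpace ρ l m) cV = x i := by
    rw [show cV = DFinsupp.mapRange.addMonoidHom f cX from rfl, key cX, hsumX]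
  rw [wtComponent_spec ρ l hdecV (x i) cV hsumV n]
  show _ = ((DFinsupp.mapRange.addMonoidHom f cX) n : V)
  rw [DFinsupp.mapRange.addMonoidHom_apply, DFinsupp.mapRange_apply]
  rfl

end AuxLemmas

/-- **Lemma (alpha-indep)**: let `W ⊆ V` be a `d`-dimensional subspace with basis
`w₁, …, w_d`, let `x = (w₁, …, w_d) ∈ X = ⊕^d V`, and let `S ⊆ X` be a closed `G`-invariant
subvariety with `x ∉ S`.  If `λ ∈ |X,x|` and `α_{S,x}(λ) > 0`, then
`α_{S,x}(λ) = min_{v ∈ W} α_{{v₀},v}(λ)`, where `v₀ = lim_{t→0} ρ(λ(t))v`. -/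
theorem kempfAlpha_eq_iInf_kempfAlpha_singleton
    {K : Type*} [Field K] [IsAlgClosed K] (R : ConnectedReductiveGroup K)
    {V : Type*} [AddCommGroup V] [Module K V] [FiniteDimensional K V]
    (ρ : R.G →* V ≃ₗ[K] V) {d : ℕ} (W : Submodule K V) (w : Fin d → V)
    (hw_indep : LinearIndependent K w)
    (hw_span : Submodule.span K (Set.range w) = W)
    (S : Set (Fin d → V)) (hS_closed : IsZariskiClosed K S)
    (hS_inv : ∀ g : R.G, ∀ y ∈ S, diagRep d ρ g y ∈ S)
    (hxS : w ∉ S)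
    (l : Kˣ →* R.G) (hl : R.IsCochar l)
    (hdecV : DirectSum.IsInternal fun i : ℤ => wtSpace ρ l i)
    (hdecX : DirectSum.IsInternal fun i : ℤ => wtSpace (diagRep d ρ) l i)
    (hlim : limitExists (diagRep d ρ) l w)
    (hpos : 0 < kempfAlpha (diagRep d ρ) l hdecX S w) :
    kempfAlpha (diagRep d ρ) l hdecX S w =
      ⨅ v ∈ (W : Set V), kempfAlpha ρ l hdecV {wtComponent ρ l hdecV v 0} v := by
  classical
  have hifX : wtComponent (diagRep d ρ) l hdecX w 0 ∈ S := by
    by_contra hc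
    rw [kempfAlpha, if_neg hc] at hpos
    exact lt_irrefl 0 hpos
  have hRHS : ∀ v : V, kempfAlpha ρ l hdecV {wtComponent ρ l hdecV v 0} v
      = ⨅ n ∈ {n : ℕ | 0 < n ∧ wtComponent ρ l hdecV v (n : ℤ) ≠ 0}, (n : ℕ∞) := by
    intro v
    rw [kempfAlpha, if_pos (Set.mem_singleton _)]
  have hnonzero_iff : ∀ n : ℤ, wtComponent (diagRep d ρ) l hdecX w n ≠ 0 ↔
      ∃ i, wtComponent ρ l hdecV (w i) n ≠ 0 := by
    intro n
    constructor
    · intro h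
      by_contra hall
      push_neg at hall
      apply h
      funext i
      rw [wtComponent_diag ρ l hdecV hdecX w n i, hall i]
      rfl
    · rintro ⟨i, hi⟩ h
      apply hi
      rw [← wtComponent_diag ρ l hdecV hdecX w n i, h]
      rfl
  rw [kempfAlpha, if_pos hifX]
  apply le_antisymm
  · refine le_iInf fun v => le_iInf fun hv => ?_
    rw [hRHS v]
    refine le_iInf fun n => le_iInf fun hn => ?_
    obtain ⟨hn0, hvn⟩ := hn
    have hex : ∃ i, wtComponent ρ l hdecV (w i) (n : ℤ) ≠ 0 := by
      by_contra hall
      push_neg at hall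
      apply hvn
      have hker : W ≤ LinearMap.ker (wtComponentL ρ l hdecV (n : ℤ)) := by
        rw [← hw_span, Submodule.span_le]
        rintro _ ⟨i, rfl⟩
        exact LinearMap.mem_ker.mpr (hall i)
      have := LinearMap.mem_ker.mp (hker hv)
      exact this
    exact iInf₂_le n ⟨hn0, (hnonzero_iff (n : ℤ)).2 hex⟩
  · refine le_iInf fun n => le_iInf fun hn => ?_
    obtain ⟨hn0, hXn⟩ := hn
    obtain ⟨i, hi⟩ := (hnonzero_iff (n : ℤ)).1 hXn
    have hwi : w i ∈ (W : Set V) := by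
      rw [← hw_span]
      exact Submodule.subset_span ⟨i, rfl⟩
    refine le_trans (iInf₂_le (w i) hwi) ?_
    rw [hRHS (w i)]
    exact iInf₂_le n ⟨hn0, hi⟩
end

section
/- Let G be a connected reductive algebraic group over an algebraically closed field K, let (ρ,V) be a finite-dimensional linear representation of G, let W ⊆ V be a d-dimensional subspace with basis w₁,…,w_d, let X = ⊕^d V with the diagonal G-action, and let x = (w₁,…,w_d) ∈ X. Assume the orbit ρ(G)x is closed in X and let λ ∈ |X,x|. Then the subspace lim_{t→0} ρ(λ(t))W := {lim_{t→0} ρ(λ(t))w : w ∈ W} of V equals ρ(g)W for some g ∈ G. -/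
section WeightProjection

variable {K : Type*} [Field K] {V : Type*} [AddCommGroup V] [Module K V]
  {G : Type*} [Group G] (ρ : G →* V ≃ₗ[K] V) (l : Kˣ →* G)

lemma apply_finsuppSum_of_mem_wtSpace (c : ℕ →₀ V) (hc : ∀ j : ℕ, c j ∈ wtSpace ρ l j)
    (t : Kˣ) : ρ (l t) (c.sum fun _ v => v) = c.sum fun j v => (t : K) ^ j • v := by
  rw [map_finsuppSum]
  refine Finset.sum_congr rfl fun j _ => ?_
  exact (hc j t).trans (by rw [zpow_natCast, Units.val_pow_eq_pow_val])

variable (hdec : DirectSum.IsInternal fun i : ℤ => wtSpace ρ l i)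

noncomputable def wtProj (i : ℤ) : V →ₗ[K] V :=
  (wtSpace ρ l i).subtype ∘ₗ DirectSum.component K ℤ (fun i => wtSpace ρ l i) i ∘ₗ
    (LinearEquiv.ofBijective (DirectSum.coeLinearMap fun i => wtSpace ρ l i) hdec).symm.toLinearMap

lemma wtProj_apply (i : ℤ) (v : V) : wtProj ρ l hdec i v = wtComponent ρ l hdec v i := by
  have h : (LinearEquiv.ofBijective (DirectSum.coeLinearMap fun i => wtSpace ρ l i) hdec).symm v =
      (Equiv.ofBijective _ hdec).symm v :=
    ((Equiv.ofBijective _ hdec).symm_apply_eq.mpr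
      ((LinearEquiv.ofBijective (DirectSum.coeLinearMap _) hdec).apply_symm_apply v).symm).symm
  exact congrArg (fun x => (x i : V)) h

lemma wtProj_of_mem {j : ℤ} {v : V} (hv : v ∈ wtSpace ρ l j) (i : ℤ) :
    wtProj ρ l hdec i v = if j = i then v else 0 := by
  split_ifs with h
  · subst h
    exact congrArg Subtype.val (hdec.ofBijective_coeLinearMap_of_mem hv)
  · exact congrArg Subtype.val (hdec.ofBijective_coeLinearMap_of_mem_ne h hv)

lemma wtProj_zero_finsuppSum (c : ℕ →₀ V) (hc : ∀ j : ℕ, c j ∈ wtSpace ρ l j) :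
    wtProj ρ l hdec 0 (c.sum fun _ v => v) = c 0 := by
  rw [map_finsuppSum, ← c.sum_ite_self_eq' 0]
  refine Finsupp.sum_congr fun j _ => ?_
  rw [wtProj_of_mem ρ l hdec (hc j)]
  exact if_congr Nat.cast_eq_zero rfl rfl

lemma wtProj_zero_finsuppSum_apply {d : ℕ} (a : ℕ →₀ (Fin d → V))
    (ha : ∀ j : ℕ, a j ∈ wtSpace (diagRep d ρ) l j) (i : Fin d) :
    wtProj ρ l hdec 0 ((a.sum fun _ x => x) i) = a 0 i := by
  have ha_i : ∀ j : ℕ, a.mapRange (· i) rfl j ∈ wtSpace ρ l j := fun j t => congrFun (ha j t) i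
  have hsum_i : (a.sum fun _ x => x) i = (a.mapRange (· i) rfl).sum fun _ v => v := by
    rw [Finsupp.sum_mapRange_index fun _ => rfl]
    exact Finset.sum_apply _ _ _
  rw [hsum_i, wtProj_zero_finsuppSum ρ l hdec _ ha_i, Finsupp.mapRange_apply]

end WeightProjection

section Zariski

open Polynomial

variable {K : Type*} [Field K] {M : Type*} [AddCommGroup M] [Module K M]

lemma zariskiClosure_mono {A B : Set M} (h : A ⊆ B) : zariskiClosure K A ⊆ zariskiClosure K B :=
  fun _ hv f hf hB => hv f hf fun a ha => hB a (h ha)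

lemma IsPolyFun.exists_eval_finsuppSum_pow_smul {f : M → K} (hf : IsPolyFun K f) (c : ℕ →₀ M) :
    ∃ p : K[X], ∀ t : K, f (c.sum fun j v => t ^ j • v) = p.eval t := by
  induction hf using Algebra.adjoin_induction with
  | mem φ hφ =>
    obtain ⟨ψ, rfl⟩ := hφ
    refine ⟨c.sum fun j v => C (ψ v) * X ^ j, fun t => ?_⟩
    simp only [map_sum, map_smul, smul_eq_mul, Finsupp.sum, eval_finsetSum, eval_mul,
      eval_C, eval_pow, eval_X, mul_comm]
  | algebraMap r => exact ⟨C r, fun t => by simp⟩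
  | add f g _ _ hf hg =>
    obtain ⟨p, hp⟩ := hf
    obtain ⟨q, hq⟩ := hg
    exact ⟨p + q, fun t => by simp [hp, hq]⟩
  | mul f g _ _ hf hg =>
    obtain ⟨p, hp⟩ := hf
    obtain ⟨q, hq⟩ := hg
    exact ⟨p * q, fun t => by simp [hp, hq]⟩

lemma apply_zero_mem_zariskiClosure_range_finsuppSum_pow_smul [Infinite K] (c : ℕ →₀ M) :
    c 0 ∈ zariskiClosure K (Set.range fun t : Kˣ => c.sum fun j v => (t : K) ^ j • v) := by
  intro f hf hvan
  obtain ⟨p, hp⟩ := hf.exists_eval_finsuppSum_pow_smul c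
  have hp_zero : p = 0 := by
    refine p.eq_zero_of_infinite_isRoot ((Set.finite_singleton (0 : K)).infinite_compl.mono ?_)
    exact fun t ht => (hp t).symm.trans (hvan _ ⟨Units.mk0 t ht, rfl⟩)
  have hc_zero : (c.sum fun j v => (0 : K) ^ j • v) = c 0 := by
    simp [Finsupp.sum, zero_pow_eq]
  rw [← hc_zero, hp, hp_zero, eval_zero]

end Zariski

lemma apply_zero_mem_zariskiClosure_orbit {K : Type*} [Field K] [Infinite K]
    {V : Type*} [AddCommGroup V] [Module K V] {G : Type*} [Group G]
    (ρ : G →* V ≃ₗ[K] V) (l : Kˣ →* G) (c : ℕ →₀ V) (hc : ∀ j : ℕ, c j ∈ wtSpace ρ l j) :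
    c 0 ∈ zariskiClosure K (Set.range fun g : G => ρ g (c.sum fun _ v => v)) := by
  refine zariskiClosure_mono ?_ (apply_zero_mem_zariskiClosure_range_finsuppSum_pow_smul c)
  rintro _ ⟨t, rfl⟩
  exact ⟨l t, apply_finsuppSum_of_mem_wtSpace ρ l c hc t⟩

theorem limit_subspace_eq_translate_of_isClosed_orbit_general
    {K : Type*} [Field K] [IsAlgClosed K] (R : ConnectedReductiveGroup K)
    {V : Type*} [AddCommGroup V] [Module K V]
    (ρ : R.G →* V ≃ₗ[K] V) {d : ℕ} (W : Submodule K V) (w : Fin d → V)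
    (hw_span : Submodule.span K (Set.range w) = W)
    (hclosed :
      zariskiClosure K (Set.range fun g : R.G => diagRep d ρ g w) =
        Set.range fun g : R.G => diagRep d ρ g w)
    (l : Kˣ →* R.G)
    (hdecV : DirectSum.IsInternal fun i : ℤ => wtSpace ρ l i)
    (hlim : limitExists (diagRep d ρ) l w) :
    ∃ g : R.G,
      (fun v : V => wtComponent ρ l hdecV v 0) '' (W : Set V) =
        (fun v : V => ρ g v) '' (W : Set V) := by
  obtain ⟨a, ha, rfl⟩ := (Submodule.mem_iSup_iff_exists_finsupp _ _).mp hlim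
  obtain ⟨g, hg⟩ := hclosed ▸ apply_zero_mem_zariskiClosure_orbit (diagRep d ρ) l a ha
  refine ⟨g, Set.image_congr fun v hv => ?_⟩
  subst hw_span
  rw [← wtProj_apply]
  refine LinearMap.eqOn_span' (f := wtProj ρ l hdecV 0) (g := (ρ g : V →ₗ[K] V)) ?_ hv
  rintro _ ⟨i, rfl⟩
  exact (wtProj_zero_finsuppSum_apply ρ l hdecV a ha i).trans (congrFun hg i).symm

/-- **Lemma (closed-case)**: let `W ⊆ V` be a `d`-dimensional subspace with basis
`w₁, …, w_d` and let `x = (w₁, …, w_d) ∈ X = ⊕^d V`.  If the orbit `ρ(G)x` is closed in `X`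
and `λ ∈ |X,x|`, then the subspace `lim_{t→0} ρ(λ(t))W = {lim_{t→0} ρ(λ(t))v ∣ v ∈ W}` of `V`
equals `ρ(g)W` for some `g ∈ G`. -/
theorem limit_subspace_eq_translate_of_isClosed_orbit
    {K : Type*} [Field K] [IsAlgClosed K] (R : ConnectedReductiveGroup K)
    {V : Type*} [AddCommGroup V] [Module K V] [FiniteDimensional K V]
    (ρ : R.G →* V ≃ₗ[K] V) {d : ℕ} (W : Submodule K V) (w : Fin d → V)
    (hw_indep : LinearIndependent K w)
    (hw_span : Submodule.span K (Set.range w) = W)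
    (hclosed :
      zariskiClosure K (Set.range fun g : R.G => diagRep d ρ g w) =
        Set.range fun g : R.G => diagRep d ρ g w)
    (l : Kˣ →* R.G) (hl : R.IsCochar l)
    (hdecV : DirectSum.IsInternal fun i : ℤ => wtSpace ρ l i)
    (hlim : limitExists (diagRep d ρ) l w) :
    ∃ g : R.G,
      (fun v : V => wtComponent ρ l hdecV v 0) '' (W : Set V) =
        (fun v : V => ρ g v) '' (W : Set V) :=
  limit_subspace_eq_translate_of_isClosed_orbit_general R ρ W w hw_span hclosed l hdecV hlim
end

section
/- Let K be an algebraically closed field, let V be a finite-dimensional K-vector space, and let 𝔥 ⊆ 𝔰𝔩(V) be a Lie subalgebra. Then 𝔥 is SL(V)-completely reducible if and only if V is a semisimple 𝔥-module. -/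
/-!
Statement 12 (McNinch, "Completely reducible Lie subalgebras", footnote in §1).

Let `K` be an algebraically closed field, `V` a finite-dimensional `K`-vector space, and
`𝔥 ⊆ 𝔰𝔩(V)` a Lie subalgebra.  Then `𝔥` is `SL(V)`-completely reducible if and only if `V` is
a semisimple `𝔥`-module.

The parabolic subgroups of `SL(V)` are exactly the subgroups `P(γ)` attached to the
(algebraic) cocharacters `γ : 𝔾_m → SL(V)`, and such cocharacters correspond to the finite
`ℤ`-gradings `V = ⊕ V_i` with `∑ i·dim V_i = 0` ("centered" gradings); the Lie algebra of
`P(γ)` consists of the trace-zero endomorphisms preserving the flag `V_{≥ i} = ⊕_{j ≥ i} V_j`,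
and the Lie algebras of the Levi factors of `P(γ)` are the trace-zero endomorphisms
preserving all weight spaces of some centered grading with the same flag.  Since `𝔥`
consists of trace-zero endomorphisms, `G`-complete reducibility of `𝔥` is expressed below
purely in terms of gradings.  Semisimplicity of `V` as an `𝔥`-module is expressed by the
property that every `𝔥`-invariant subspace admits an `𝔥`-invariant complement.
-/


variable (K V : Type*) [Field K] [AddCommGroup V] [Module K V]

/-- A (finite) `ℤ`-grading of the `K`-vector space `V`, i.e. an internal direct sum
decomposition `V = ⊕_{i ∈ ℤ} V_i` with finitely many nonzero summands.  Such gradings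
correspond to the algebraic cocharacters `𝔾_m → GL(V)` (the cocharacter acts on `V_i` by
`t ↦ tⁱ`). -/
structure ZGrading where
  /-- the weight spaces -/
  w : ℤ → Submodule K V
  internal : DirectSum.IsInternal w
  finiteSupport : {i : ℤ | w i ≠ ⊥}.Finite

variable {K V}

namespace ZGrading

/-- The descending filtration `V_{≥ i} = ⊕_{j ≥ i} V_j` (the flag) attached to a grading. -/
def filt (gr : ZGrading K V) (i : ℤ) : Submodule K V :=
  ⨆ j ≥ i, gr.w j

/-- A grading is centered if `∑ i·dim V_i = 0`; these are the gradings corresponding to the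
cocharacters of `SL(V)` (the associated cocharacter of `GL(V)` has determinant
`t ↦ t^{∑ i·dim V_i}`). -/
def IsCentered (gr : ZGrading K V) : Prop :=
  ∑ᶠ i : ℤ, i * (Module.finrank K (gr.w i) : ℤ) = 0

end ZGrading

attribute [local instance 100] LieRing.ofAssociativeRing

/-- A Lie subalgebra `𝔥 ⊆ 𝔰𝔩(V)` is `SL(V)`-completely reducible: whenever `𝔥 ⊆ Lie(P)` for a
parabolic subgroup `P ⊆ SL(V)` — that is, whenever `𝔥` preserves the flag attached to a
(centered) grading of `V` — there is a Levi factor `L` of `P` with `𝔥 ⊆ Lie(L)` — that is,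
a grading with the same flag all of whose weight spaces are preserved by `𝔥`. -/
def LieIsCrSL (𝔥 : LieSubalgebra K (Module.End K V)) : Prop :=
  ∀ gr : ZGrading K V, gr.IsCentered →
    (∀ x ∈ 𝔥, ∀ i, ∀ u ∈ gr.filt i, x u ∈ gr.filt i) →
    ∃ gr' : ZGrading K V, gr'.IsCentered ∧ Set.range gr'.filt = Set.range gr.filt ∧
      ∀ x ∈ 𝔥, ∀ i, ∀ u ∈ gr'.w i, x u ∈ gr'.w i

/-!
If `V` is semisimple and `𝔥` preserves the flag `V_{≥ i}` of a centered grading, choose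
`𝔥`-stable complements `D_i` of `V_{≥ i+1}`; then `D_i ∩ V_{≥ i}` are `𝔥`-stable weight spaces of
a new grading with the same flag. Two gradings with the same flag have weight spaces of the same
dimensions, so the new grading is centered too.

Conversely, for an `𝔥`-stable `U ≠ 0` with some complement `W`, put `U` in weight `dim W` and `W`
in weight `-dim U`: this centered grading has flag `V ⊇ U ⊇ 0`, which `𝔥` preserves. A grading
with the same flag and `𝔥`-stable weight spaces has `U = V_{≥ i}` for some `i`, and the sum of its
weight spaces below `i` is an `𝔥`-stable complement of `U`.
-/

section Splitting

variable {α : Type*} [CompleteLattice α]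

lemma Int.biSup_ge_eq_sup_biSup_ge_add_one (f : ℤ → α) (i : ℤ) :
    ⨆ j ≥ i, f j = f i ⊔ ⨆ j ≥ i + 1, f j := by
  rw [biSup_ge_eq_sup]
  simp only [gt_iff_lt, Int.lt_iff_add_one_le]

lemma Int.biSup_lt_add_one_eq_sup (f : ℤ → α) (i : ℤ) :
    ⨆ j < i + 1, f j = (⨆ j < i, f j) ⊔ f i := by
  simp_rw [Int.lt_add_one_iff, biSup_le_eq_sup]

/-- For a flag `F` of subspaces, splittings are exactly the gradings with flag `F`
(`ZGrading.isSplitting`, `ZGrading.ofSplitting`). -/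
structure IsSplitting (F C : ℤ → α) : Prop where
  disjoint : ∀ i, Disjoint (C i) (F (i + 1))
  sup_eq : ∀ i, C i ⊔ F (i + 1) = F i
  exists_eq_top : ∃ M, ∀ i ≤ M, F i = ⊤
  exists_eq_bot : ∃ N, ∀ i ≥ N, F i = ⊥

namespace IsSplitting

variable {F C : ℤ → α} (h : IsSplitting F C)
include h

lemma le (i : ℤ) : C i ≤ F i :=
  le_sup_left.trans (h.sup_eq i).le

lemma biSup_ge_eq (i : ℤ) : ⨆ j ≥ i, C j = F i := by
  obtain ⟨N, hN⟩ := h.exists_eq_bot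
  rcases le_or_gt N i with hi | hi
  · rw [hN i hi, eq_bot_iff]
    exact iSup₂_le fun j hj => (h.le j).trans (hN j (hi.trans hj)).le
  refine Int.leInductionDown (m := N) (motive := fun i _ => ⨆ j ≥ i, C j = F i) ?_ ?_ i hi.le
  · rw [hN N le_rfl, eq_bot_iff]
    exact iSup₂_le fun j hj => (h.le j).trans (hN j hj).le
  · intro n _ ih
    rw [Int.biSup_ge_eq_sup_biSup_ge_add_one, sub_add_cancel, ih]
    simpa using h.sup_eq (n - 1)

lemma iSup_eq_top : ⨆ j, C j = ⊤ := by
  obtain ⟨M, hM⟩ := h.exists_eq_top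
  rw [eq_top_iff, ← hM M le_rfl, ← h.biSup_ge_eq M]
  exact iSup₂_le fun j _ => le_iSup C j

lemma eq_bot_of_lt {M : ℤ} (hM : ∀ i ≤ M, F i = ⊤) {i : ℤ} (hi : i < M) : C i = ⊥ := by
  simpa [hM (i + 1) (by omega)] using h.disjoint i

lemma eq_bot_of_ge {N : ℤ} (hN : ∀ i ≥ N, F i = ⊥) {i : ℤ} (hi : N ≤ i) : C i = ⊥ :=
  eq_bot_iff.2 ((h.le i).trans (hN i hi).le)

lemma finite_setOf_ne_bot : {i | C i ≠ ⊥}.Finite := by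
  obtain ⟨M, hM⟩ := h.exists_eq_top
  obtain ⟨N, hN⟩ := h.exists_eq_bot
  refine (Set.finite_Icc M N).subset fun i hi => ⟨?_, ?_⟩
  · by_contra hlt
    exact hi (h.eq_bot_of_lt hM (not_le.1 hlt))
  · by_contra hlt
    exact hi (h.eq_bot_of_ge hN (not_le.1 hlt).le)

variable [IsModularLattice α]

lemma disjoint_biSup_lt (i : ℤ) : Disjoint (⨆ j < i, C j) (F i) := by
  obtain ⟨M, hM⟩ := h.exists_eq_top
  have hbot : ∀ i ≤ M, ⨆ j < i, C j = ⊥ := fun i hi =>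
    eq_bot_iff.2 (iSup₂_le fun j hj => (h.eq_bot_of_lt hM (hj.trans_le hi)).le)
  rcases le_or_gt i M with hi | hi
  · simp [hbot i hi]
  refine Int.leInduction (m := M) (motive := fun i _ => Disjoint (⨆ j < i, C j) (F i))
    (by simp [hbot M le_rfl]) (fun n _ ih => ?_) i hi.le
  rw [Int.biSup_lt_add_one_eq_sup]
  exact (h.disjoint n).disjoint_sup_left_of_disjoint_sup_right (by rwa [h.sup_eq])

lemma iSupIndep : iSupIndep C := by
  intro i
  have hle : ⨆ j ≠ i, C j ≤ F (i + 1) ⊔ ⨆ j < i, C j := by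
    refine iSup₂_le fun j hj => ?_
    rcases hj.lt_or_gt with hlt | hgt
    · exact le_sup_of_le_right (le_iSup₂_of_le j hlt le_rfl)
    · exact le_sup_of_le_left (h.biSup_ge_eq (i + 1) ▸ le_iSup₂_of_le j hgt le_rfl)
  refine Disjoint.mono_right hle ((h.disjoint i).disjoint_sup_right_of_disjoint_sup_left ?_)
  rw [h.sup_eq]
  exact (h.disjoint_biSup_lt i).symm

lemma inf_of_isCompl {D : ℤ → α} (hD : ∀ i, IsCompl (F (i + 1)) (D i)) :
    IsSplitting F fun i => D i ⊓ F i where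
  disjoint i := (hD i).disjoint.symm.mono_left inf_le_left
  sup_eq i := by
    rw [inf_comm, inf_sup_assoc_of_le _ (le_sup_right.trans (h.sup_eq i).le), sup_comm,
      (hD i).sup_eq_top, inf_top_eq]
  exists_eq_top := h.exists_eq_top
  exists_eq_bot := h.exists_eq_bot

end IsSplitting

end Splitting

lemma Module.End.invtSubmodule.iSup_mem {R M : Type*} [Semiring R] [AddCommMonoid M]
    [Module R M] {f : Module.End R M} {ι : Sort*} {p : ι → Submodule R M}
    (hp : ∀ i, p i ∈ f.invtSubmodule) : ⨆ i, p i ∈ f.invtSubmodule := by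
  rw [Module.End.mem_invtSubmodule_iff_map_le, Submodule.map_iSup]
  exact iSup_mono fun i => (Module.End.mem_invtSubmodule_iff_map_le f).1 (hp i)

lemma Submodule.finrank_eq_of_disjoint_of_sup_eq [FiniteDimensional K V]
    {A A' B : Submodule K V} (hA : Disjoint A B) (hA' : Disjoint A' B) (hsup : A ⊔ B = A' ⊔ B) :
    Module.finrank K A = Module.finrank K A' := by
  have e := Submodule.finrank_sup_add_finrank_inf_eq A B
  have e' := Submodule.finrank_sup_add_finrank_inf_eq A' B
  rw [hA.eq_bot, finrank_bot, hsup] at e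
  rw [hA'.eq_bot, finrank_bot] at e'
  omega

namespace ZGrading

lemma isSplitting (gr : ZGrading K V) : IsSplitting gr.filt gr.w where
  disjoint i := gr.internal.submodule_iSupIndep.disjoint_biSup (y := {j | j ≥ i + 1}) (by simp)
  sup_eq i := (Int.biSup_ge_eq_sup_biSup_ge_add_one gr.w i).symm
  exists_eq_top := by
    obtain ⟨M, hM⟩ := gr.finiteSupport.bddBelow
    refine ⟨M, fun i hi => eq_top_iff.2 ?_⟩
    rw [← gr.internal.submodule_iSup_eq_top]
    refine iSup_le fun j => ?_
    by_cases hj : gr.w j = ⊥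
    · simp [hj]
    · exact le_iSup₂_of_le j (hi.trans (hM hj)) le_rfl
  exists_eq_bot := by
    obtain ⟨N, hN⟩ := gr.finiteSupport.bddAbove
    refine ⟨N + 1, fun i hi => eq_bot_iff.2 (iSup₂_le fun j hj => ?_)⟩
    exact (not_ne_iff.1 fun hne => absurd (hN hne) (by omega)).le

lemma isCompl_filt (gr : ZGrading K V) (i : ℤ) : IsCompl (gr.filt i) (⨆ j < i, gr.w j) where
  disjoint := gr.internal.submodule_iSupIndep.disjoint_biSup_biSup (s := Set.Ici i)
    (t := Set.Iio i) (Set.Iio_disjoint_Ici le_rfl).symm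
  codisjoint := by
    rw [codisjoint_iff, ← gr.internal.submodule_iSup_eq_top, iSup_split gr.w (· ≥ i)]
    simp only [ge_iff_le, not_le]
    rfl

def ofSplitting {F C : ℤ → Submodule K V} (h : IsSplitting F C) : ZGrading K V where
  w := C
  internal :=
    DirectSum.isInternal_submodule_of_iSupIndep_of_iSup_eq_top h.iSupIndep h.iSup_eq_top
  finiteSupport := h.finite_setOf_ne_bot

lemma filt_ofSplitting {F C : ℤ → Submodule K V} (h : IsSplitting F C) :
    (ofSplitting h).filt = F :=
  funext h.biSup_ge_eq

variable [FiniteDimensional K V]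

lemma finrank_w_eq_of_filt_eq {gr gr' : ZGrading K V} (hfilt : gr.filt = gr'.filt) (i : ℤ) :
    Module.finrank K (gr.w i) = Module.finrank K (gr'.w i) := by
  refine Submodule.finrank_eq_of_disjoint_of_sup_eq (gr.isSplitting.disjoint i)
    (hfilt ▸ gr'.isSplitting.disjoint i) ?_
  rw [gr.isSplitting.sup_eq, hfilt, gr'.isSplitting.sup_eq]

lemma IsCentered.of_filt_eq {gr gr' : ZGrading K V} (h : gr.IsCentered)
    (hfilt : gr.filt = gr'.filt) : gr'.IsCentered := by
  unfold IsCentered at h ⊢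
  simpa only [finrank_w_eq_of_filt_eq hfilt] using h

lemma exists_isCentered_range_filt_eq {U : Submodule K V} (hU : U ≠ ⊥) :
    ∃ gr : ZGrading K V, gr.IsCentered ∧ Set.range gr.filt = {⊤, U, ⊥} := by
  obtain ⟨W, hW⟩ := U.exists_isCompl
  -- weights chosen so that `a * dim U + b * dim W = 0`
  set a : ℤ := (Module.finrank K W : ℤ)
  set b : ℤ := -(Module.finrank K U : ℤ)
  have hab : b < a := by
    have := Submodule.finrank_eq_zero.not.2 hU
    omega
  let F : ℤ → Submodule K V := fun i => if i ≤ b then ⊤ else if i ≤ a then U else ⊥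
  let C : ℤ → Submodule K V := fun i => if i = a then U else if i = b then W else ⊥
  have hsplit : IsSplitting F C :=
    { disjoint i := by
        simp only [F, C]
        split_ifs <;> first | omega | simp [hW.disjoint.symm]
      sup_eq i := by
        simp only [F, C]
        split_ifs <;> first | omega | simp [hW.symm.sup_eq_top]
      exists_eq_top := ⟨b, fun i hi => if_pos hi⟩
      exists_eq_bot := ⟨a + 1, fun i hi => by simp only [F]; split_ifs <;> first | omega | rfl⟩ }
  refine ⟨ofSplitting hsplit, ?_, ?_⟩
  · show ∑ᶠ i, i * (Module.finrank K (C i) : ℤ) = 0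
    rw [finsum_eq_sum_of_support_subset _ (s := {a, b}) fun i hi => ?_, Finset.sum_pair hab.ne']
    · have hCb : C b = W := by simp [C, hab.ne]
      rw [hCb, show C a = U from if_pos rfl]
      ring
    · simp only [Function.mem_support, Finset.coe_insert, Finset.coe_singleton] at hi ⊢
      by_contra h
      simp_all [C]
  · rw [filt_ofSplitting]
    ext X
    constructor
    · rintro ⟨i, rfl⟩
      simp only [F]
      split_ifs <;> simp
    · rintro (rfl | rfl | rfl)
      exacts [⟨b, if_pos le_rfl⟩, ⟨a, by simp [F, hab]⟩, ⟨a + 1, by simp [F]; omega⟩]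

end ZGrading

theorem lieIsCrSL_iff_semisimple_general
    {K V : Type*} [Field K] [AddCommGroup V] [Module K V]
    [FiniteDimensional K V]
    (𝔥 : LieSubalgebra K (Module.End K V)) :
    LieIsCrSL 𝔥 ↔
      ∀ U : Submodule K V, (∀ x ∈ 𝔥, ∀ u ∈ U, x u ∈ U) →
        ∃ U' : Submodule K V, (∀ x ∈ 𝔥, ∀ u ∈ U', x u ∈ U') ∧ IsCompl U U' := by
  constructor
  · intro hcr U hU
    rcases eq_or_ne U ⊥ with rfl | hU₀
    · exact ⟨⊤, fun _ _ _ _ => Submodule.mem_top, isCompl_bot_top⟩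
    obtain ⟨gr, hcent, hrange⟩ := ZGrading.exists_isCentered_range_filt_eq hU₀
    have hflag : ∀ x ∈ 𝔥, ∀ i, gr.filt i ∈ x.invtSubmodule := by
      intro x hx i
      have hi : gr.filt i ∈ ({⊤, U, ⊥} : Set _) := hrange ▸ Set.mem_range_self i
      rcases hi with hi | hi | hi <;> rw [hi]
      exacts [Module.End.invtSubmodule.top_mem x, hU x hx, Module.End.invtSubmodule.bot_mem x]
    obtain ⟨gr', -, hrange', hw⟩ := hcr gr hcent hflag
    obtain ⟨i, rfl⟩ : U ∈ Set.range gr'.filt := by simp [hrange', hrange]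
    exact ⟨⨆ j < i, gr'.w j,
      fun x hx => Module.End.invtSubmodule.iSup_mem fun j =>
        Module.End.invtSubmodule.iSup_mem fun _ => hw x hx j,
      gr'.isCompl_filt i⟩
  · intro hss gr hcent hflag
    choose D hDinv hD using fun i => hss (gr.filt (i + 1)) (hflag · · (i + 1))
    have hsplit := gr.isSplitting.inf_of_isCompl hD
    exact ⟨.ofSplitting hsplit, hcent.of_filt_eq (ZGrading.filt_ofSplitting hsplit).symm,
      by rw [ZGrading.filt_ofSplitting],
      fun x hx i => Module.End.invtSubmodule.inf_mem (hDinv i x hx) (hflag x hx i)⟩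

/-- **Footnote in §1**: a Lie subalgebra `𝔥 ⊆ 𝔰𝔩(V)` is `SL(V)`-completely reducible if and
only if `V` is a semisimple `𝔥`-module. -/
theorem lieIsCrSL_iff_semisimple
    {K V : Type*} [Field K] [IsAlgClosed K] [AddCommGroup V] [Module K V]
    [FiniteDimensional K V]
    (𝔥 : LieSubalgebra K (Module.End K V))
    (h𝔥sl : ∀ x ∈ 𝔥, LinearMap.trace K V x = 0) :
    LieIsCrSL 𝔥 ↔
      ∀ U : Submodule K V, (∀ x ∈ 𝔥, ∀ u ∈ U, x u ∈ U) →
        ∃ U' : Submodule K V, (∀ x ∈ 𝔥, ∀ u ∈ U', x u ∈ U') ∧ IsCompl U U' :=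
  lieIsCrSL_iff_semisimple_general 𝔥
end
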